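/- Let (E, M) be an orthogonal factorisation system on a category C. Let S, T, S', T' be monads on C such that E is closed under S and under S', let m : S → T and m'' : S' → T' be monad morphisms, and let f₁ : S → S' and f₂ : T → T' be monad morphisms forming a commuting square, i.e. f₂ ∘ m = m'' ∘ f₁ (componentwise). Suppose m factors as m = n ∘ e with e : S → M₀, n : M₀ → T monad morphisms whose components lie in E and M respectively, and similarly m'' = n' ∘ e' with e' : S' → M₀', n' : M₀' → T' having components in E and M respectively. Then there exists a unique monad morphism h : M₀ → M₀' such that h ∘ e = e' ∘ f₁ and n' ∘ h = f₂ ∘ n (componentwise). -/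

import Mathlib

/-! Componentwise, the required morphism is the diagonal filler of the square formed by
`e_X ∈ E` and `n'_X ∈ M`. Naturality and the two monad laws are then forced by uniqueness of
fillers: both sides of each law agree after precomposing with a map in `E` and postcomposing with
one in `M`. For the multiplication law that map in `E` is `S(e_X) ≫ e_{M₀ X}`, which is where the
closure of `E` under `S` enters. -/

open CategoryTheory

universe v u

/-- An orthogonal factorisation system on a category `C`. -/
structure IsOFS {C : Type u} [Category.{v} C] (E M : MorphismProperty C) : Prop where
  comp_E : ∀ {X Y Z : C} (f : X ⟶ Y) (g : Y ⟶ Z), E f → E g → E (f ≫ g)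
  comp_M : ∀ {X Y Z : C} (f : X ⟶ Y) (g : Y ⟶ Z), M f → M g → M (f ≫ g)
  iso_E : ∀ {X Y : C} (f : X ⟶ Y), IsIso f → E f
  iso_M : ∀ {X Y : C} (f : X ⟶ Y), IsIso f → M f
  exists_fac : ∀ {X Y : C} (f : X ⟶ Y),
      ∃ (A : C) (e : X ⟶ A) (m : A ⟶ Y), E e ∧ M m ∧ e ≫ m = f
  fillin : ∀ {W X Y Z : C} (e : W ⟶ X) (m : Y ⟶ Z) (f : W ⟶ Y) (g : X ⟶ Z),
      E e → M m → f ≫ m = e ≫ g → ∃! h : X ⟶ Y, e ≫ h = f ∧ h ≫ m = g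

namespace IsOFS

variable {C : Type u} [Category.{v} C] {E M : MorphismProperty C}

theorem hom_ext (hOFS : IsOFS E M) {W X Y Z : C} {e : W ⟶ X} {m : Y ⟶ Z} (he : E e) (hm : M m)
    {u v : X ⟶ Y} (h₁ : e ≫ u = e ≫ v) (h₂ : u ≫ m = v ≫ m) : u = v :=
  (hOFS.fillin e m (e ≫ v) (v ≫ m) he hm (Category.assoc _ _ _)).unique ⟨h₁, h₂⟩ ⟨rfl, rfl⟩

theorem existsUnique_natTrans_fillin (hOFS : IsOFS E M) {D : Type*} [Category D]
    {F G H K : D ⥤ C} {e : F ⟶ G} {n : H ⟶ K} (he : ∀ X, E (e.app X)) (hn : ∀ X, M (n.app X))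
    (α : F ⟶ H) (β : G ⟶ K) (hsq : ∀ X, α.app X ≫ n.app X = e.app X ≫ β.app X) :
    ∃! h : G ⟶ H, (∀ X, e.app X ≫ h.app X = α.app X) ∧ (∀ X, h.app X ≫ n.app X = β.app X) := by
  choose h hh huniq using fun X => hOFS.fillin _ _ _ _ (he X) (hn X) (hsq X)
  have naturality : ∀ {X Y : D} (f : X ⟶ Y), G.map f ≫ h Y = h X ≫ H.map f := by
    intro X Y f
    apply hOFS.hom_ext (he X) (hn Y)
    · rw [← e.naturality_assoc, (hh Y).1, α.naturality, ← (hh X).1, Category.assoc]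
    · rw [Category.assoc, (hh Y).2, β.naturality, ← (hh X).2, Category.assoc, Category.assoc,
        n.naturality]
  refine ⟨⟨h, fun _ _ => naturality⟩, ⟨fun X => (hh X).1, fun X => (hh X).2⟩, ?_⟩
  rintro k ⟨hk₁, hk₂⟩
  ext X
  exact huniq X (k.app X) ⟨hk₁ X, hk₂ X⟩

theorem existsUnique_monadHom_fillin (hOFS : IsOFS E M) {A B P Q : Monad C}
    (hA : ∀ {X Y : C} (f : X ⟶ Y), E f → E (A.map f))
    {e : A ⟶ B} {n : P ⟶ Q} (he : ∀ X, E (e.app X)) (hn : ∀ X, M (n.app X))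
    (α : A ⟶ P) (β : B ⟶ Q) (hsq : ∀ X, α.app X ≫ n.app X = e.app X ≫ β.app X) :
    ∃! h : B ⟶ P, (∀ X, e.app X ≫ h.app X = α.app X) ∧ (∀ X, h.app X ≫ n.app X = β.app X) := by
  obtain ⟨h, ⟨h₁, h₂⟩, huniq⟩ :=
    hOFS.existsUnique_natTrans_fillin he hn α.toNatTrans β.toNatTrans hsq
  refine ⟨{ toNatTrans := h, app_η := ?_, app_μ := ?_ }, ⟨h₁, h₂⟩,
    fun k hk => MonadHom.ext (congrArg NatTrans.app (huniq k.toNatTrans hk))⟩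
  · intro X
    rw [← e.app_η, Category.assoc, h₁, α.app_η]
  · intro X
    apply hOFS.hom_ext (hOFS.comp_E _ _ (hA _ (he X)) (he _)) (hn X)
    · calc (A.map (e.app X) ≫ e.app (B.obj X)) ≫ B.μ.app X ≫ h.app X
          = A.μ.app X ≫ α.app X := by rw [← Category.assoc, ← e.app_μ, Category.assoc, h₁]
        _ = (A.map (α.app X) ≫ α.app (P.obj X)) ≫ P.μ.app X := α.app_μ X
        _ = _ := by
          rw [← h₁, ← h₁, A.map_comp]
          simp only [Category.assoc, NatTrans.naturality_assoc]
    · calc (B.μ.app X ≫ h.app X) ≫ n.app X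
          = B.μ.app X ≫ β.app X := by rw [Category.assoc, h₂]
        _ = (B.map (β.app X) ≫ β.app (Q.obj X)) ≫ Q.μ.app X := β.app_μ X
        _ = _ := by
          rw [← h₂, ← h₂, B.map_comp]
          simp only [Category.assoc, MonadHom.app_μ, h.naturality_assoc (n.app X)]

end IsOFS

theorem monad_factorisation_functorial_general {C : Type u} [Category.{v} C]
    (E M : MorphismProperty C) (hOFS : IsOFS E M)
    (S T S' T' : Monad C)
    (hS : ∀ {X Y : C} (f : X ⟶ Y), E f → E (S.map f))
    (m : S ⟶ T) (m'' : S' ⟶ T')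
    (f₁ : S ⟶ S') (f₂ : T ⟶ T')
    (hsq : ∀ X : C, m.app X ≫ f₂.app X = f₁.app X ≫ m''.app X)
    (M₀ : Monad C) (e : S ⟶ M₀) (n : M₀ ⟶ T)
    (hfac : e ≫ n = m) (he : ∀ X : C, E (e.app X))
    (M₀' : Monad C) (e' : S' ⟶ M₀') (n' : M₀' ⟶ T')
    (hfac' : e' ≫ n' = m'') (hn' : ∀ X : C, M (n'.app X)) :
    ∃! h : M₀ ⟶ M₀',
      (∀ X : C, e.app X ≫ h.app X = f₁.app X ≫ e'.app X) ∧
      (∀ X : C, h.app X ≫ n'.app X = n.app X ≫ f₂.app X) := by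
  subst hfac hfac'
  refine hOFS.existsUnique_monadHom_fillin hS he hn' (f₁ ≫ e') (n ≫ f₂) fun X => ?_
  simpa using (hsq X).symm

/-- Functoriality of the factorisation of monad morphisms: a commuting square of monad
morphisms induces a unique monad morphism between the middle monads of the
factorisations. -/
theorem monad_factorisation_functorial {C : Type u} [Category.{v} C]
    (E M : MorphismProperty C) (hOFS : IsOFS E M)
    (S T S' T' : Monad C)
    (hS : ∀ {X Y : C} (f : X ⟶ Y), E f → E (S.map f))
    (hS' : ∀ {X Y : C} (f : X ⟶ Y), E f → E (S'.map f))
    (m : S ⟶ T) (m'' : S' ⟶ T')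
    (f₁ : S ⟶ S') (f₂ : T ⟶ T')
    (hsq : ∀ X : C, m.app X ≫ f₂.app X = f₁.app X ≫ m''.app X)
    (M₀ : Monad C) (e : S ⟶ M₀) (n : M₀ ⟶ T)
    (hfac : e ≫ n = m) (he : ∀ X : C, E (e.app X)) (hn : ∀ X : C, M (n.app X))
    (M₀' : Monad C) (e' : S' ⟶ M₀') (n' : M₀' ⟶ T')
    (hfac' : e' ≫ n' = m'') (he' : ∀ X : C, E (e'.app X)) (hn' : ∀ X : C, M (n'.app X)) :
    ∃! h : M₀ ⟶ M₀',
      (∀ X : C, e.app X ≫ h.app X = f₁.app X ≫ e'.app X) ∧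
      (∀ X : C, h.app X ≫ n'.app X = n.app X ≫ f₂.app X) :=
  monad_factorisation_functorial_general E M hOFS S T S' T' hS m m'' f₁ f₂ hsq M₀ e n hfac he M₀' e'
    n' hfac' hn'
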